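/- arXiv:1905.00206 — 2 statements merged into one kernel-verified Lean document; each statement's English description precedes it below -/
import Mathlib

section
/- Let d ≥ 1 and let ρ : ℝ^d → ℝ be Lebesgue-integrable with |ρ(t)| ≤ 1 for all t ∈ ℝ^d. Then for every u ∈ ℝ the series Σ_{n=1}^∞ (e^{-u²}/(2π)) · He_{n-1}(u)²/n! · ∫_{ℝ^d} |ρ(t)|^n dt converges, and there exists an absolute constant C > 0 (independent of u, d and ρ) such that Σ_{n=1}^∞ (e^{-u²}/(2π)) · He_{n-1}(u)²/n! · ∫_{ℝ^d} |ρ(t)|^n dt ≤ C ∫_{ℝ^d} |ρ(t)| dt. In particular the series σ²(u) := Σ_{n=1}^∞ (e^{-u²}/(2π)) · He_{n-1}(u)²/n! · ∫_{ℝ^d} ρ(t)^n dt converges absolutely, with |σ²(u)| ≤ C ∫_{ℝ^d} |ρ(t)| dt uniformly in u. -/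
set_option maxHeartbeats 1000000

open MeasureTheory ProbabilityTheory

/-- The `n`-th probabilist's Hermite polynomial, evaluated at a real point. -/
noncomputable def He (n : ℕ) (x : ℝ) : ℝ :=
  Polynomial.aeval x (Polynomial.hermite n)

namespace LimVarAux

open MeasureTheory Real Filter Complex
open scoped FourierTransform

lemma int_pow_gauss (n : ℕ) {b : ℝ} (hb : 0 < b) :
    Integrable (fun x : ℝ => x ^ n * Real.exp (-b * x ^ 2)) := by
  have h := integrable_rpow_mul_exp_neg_mul_sq hb
    (s := (n : ℝ)) (lt_of_lt_of_le neg_one_lt_zero (Nat.cast_nonneg n))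
  simpa [Real.rpow_natCast] using h

lemma int_abs_pow_gauss (n : ℕ) {b : ℝ} (hb : 0 < b) :
    Integrable (fun x : ℝ => |x| ^ n * Real.exp (-b * x ^ 2)) := by
  have := (int_pow_gauss n hb).abs
  simpa [abs_mul, abs_pow, abs_of_pos (Real.exp_pos _)] using this

lemma gauss_eq (x : ℝ) : Real.exp (-(x ^ 2 / 2)) = Real.exp (-(1/2 : ℝ) * x ^ 2) := by
  ring_nf

lemma int_pow_gauss' (n : ℕ) :
    Integrable (fun x : ℝ => x ^ n * Real.exp (-(x ^ 2 / 2))) := by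
  simpa only [← gauss_eq] using int_pow_gauss n (b := 1/2) (by norm_num)

lemma int_abs_pow_gauss' (n : ℕ) :
    Integrable (fun x : ℝ => |x| ^ n * Real.exp (-(x ^ 2 / 2))) := by
  simpa only [← gauss_eq] using int_abs_pow_gauss n (b := 1/2) (by norm_num)

/-- Absolute moments of the (unnormalised) Gaussian weight. -/
noncomputable def Kg (n : ℕ) : ℝ := ∫ x : ℝ, |x| ^ n * Real.exp (-(x ^ 2 / 2))

lemma Kg_nonneg (n : ℕ) : 0 ≤ Kg n :=
  integral_nonneg fun x => mul_nonneg (pow_nonneg (abs_nonneg x) n) (Real.exp_pos _).le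

lemma tendsto_pow_gauss (n : ℕ) :
    Tendsto (fun x : ℝ => x ^ n * Real.exp (-(x ^ 2 / 2))) atTop (nhds 0) := by
  have h := rpow_mul_exp_neg_mul_sq_isLittleO_exp_neg (b := 1/2) (by norm_num) (n : ℝ)
  have h2 : Tendsto (fun x : ℝ => Real.exp (-(1/2) * x)) atTop (nhds 0) := by
    have h0 : Tendsto (fun x : ℝ => Real.exp (-(x / 2))) atTop (nhds 0) :=
      Real.tendsto_exp_neg_atTop_nhds_zero.comp (tendsto_id.atTop_div_const two_pos)
    refine h0.congr fun x => by ring_nf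
  have h3 := h.isBigO.trans_tendsto h2
  have : (fun x : ℝ => x ^ n * Real.exp (-(x ^ 2 / 2)))
      =ᶠ[atTop] fun x : ℝ => x ^ (n : ℝ) * Real.exp (-(1/2 : ℝ) * x ^ 2) := by
    filter_upwards [eventually_ge_atTop (0:ℝ)] with x hx
    rw [Real.rpow_natCast, gauss_eq]
  exact Tendsto.congr' this.symm h3

lemma Kg_eq_Ioi (n : ℕ) : Kg n = 2 * ∫ x in Set.Ioi (0:ℝ), x ^ n * Real.exp (-(x ^ 2 / 2)) := by
  rw [Kg, ← integral_comp_abs (f := fun x => x ^ n * Real.exp (-(x ^ 2 / 2)))]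
  congr 1 with x
  rw [_root_.sq_abs]

lemma Kg_rec (n : ℕ) : Kg (n + 2) = (n + 1 : ℝ) * Kg n := by
  have hderiv : ∀ x ∈ Set.Ici (0:ℝ), HasDerivAt (fun x : ℝ => x ^ (n+1) * Real.exp (-(x ^ 2 / 2)))
      ((n + 1 : ℝ) * x ^ n * Real.exp (-(x ^ 2 / 2)) - x ^ (n+2) * Real.exp (-(x ^ 2 / 2))) x := by
    intro x _
    have h1 : HasDerivAt (fun x : ℝ => x ^ (n+1)) ((n + 1 : ℝ) * x ^ n) x := by
      simpa using hasDerivAt_pow (n+1) x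
    have h2 : HasDerivAt (fun x : ℝ => Real.exp (-(x ^ 2 / 2))) (-x * Real.exp (-(x ^ 2 / 2))) x := by
      have hx : HasDerivAt (fun x : ℝ => -(x ^ 2 / 2)) (-x) x := by
        exact (((hasDerivAt_pow 2 x).div_const 2).neg).congr_deriv (by norm_num)
      simpa [mul_comm] using hx.exp
    have := h1.mul h2
    exact this.congr_deriv (by ring)
  have f'int : IntegrableOn (fun x : ℝ =>
      (n + 1 : ℝ) * x ^ n * Real.exp (-(x ^ 2 / 2)) - x ^ (n+2) * Real.exp (-(x ^ 2 / 2)))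
      (Set.Ioi (0:ℝ)) := by
    apply Integrable.integrableOn
    exact (((int_pow_gauss' n).const_mul ((n:ℝ)+1)).sub (int_pow_gauss' (n+2))).congr
      (Eventually.of_forall fun x => by simp only [Pi.sub_apply]; ring)
  have key := integral_Ioi_of_hasDerivAt_of_tendsto' hderiv f'int (tendsto_pow_gauss (n+1))
  simp only [ne_eq, Nat.succ_ne_zero, not_false_eq_true, zero_pow, zero_mul, zero_sub, neg_eq_zero] at key
  have key : ∫ x in Set.Ioi (0:ℝ), ((n + 1 : ℝ) * x ^ n * Real.exp (-(x ^ 2 / 2))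
      - x ^ (n+2) * Real.exp (-(x ^ 2 / 2))) = 0 := by
    simpa using key
  have hsub := integral_sub (((int_pow_gauss' n).const_mul ((n:ℝ)+1)).integrableOn (s := Set.Ioi 0))
      ((int_pow_gauss' (n+2)).integrableOn (s := Set.Ioi 0))
  rw [Kg_eq_Ioi, Kg_eq_Ioi]
  have key2 := key
  rw [show (fun x : ℝ => (n + 1 : ℝ) * x ^ n * Real.exp (-(x ^ 2 / 2))
      - x ^ (n+2) * Real.exp (-(x ^ 2 / 2))) = (fun x : ℝ => ((n + 1 : ℝ) * (x ^ n * Real.exp (-(x ^ 2 / 2))))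
      - x ^ (n+2) * Real.exp (-(x ^ 2 / 2))) from funext fun x => by ring] at key2
  rw [hsub] at key2
  rw [integral_const_mul] at key2
  linarith [key2]

/-- The normalised squared moments. -/
noncomputable def bseq (n : ℕ) : ℝ := Kg n ^ 2 / (Nat.factorial (n + 1) : ℝ)

lemma bseq_nonneg (n : ℕ) : 0 ≤ bseq n :=
  div_nonneg (sq_nonneg _) (Nat.cast_nonneg _)

lemma bseq_rec (n : ℕ) :
    bseq (n + 2) = bseq n * ((n+1:ℝ)^2 / ((n+2) * (n+3))) := by
  have h2 : (Nat.factorial (n + 3) : ℝ) = (n+3) * ((n+2) * (Nat.factorial (n+1))) := by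
    push_cast [Nat.factorial_succ]
    ring
  have hfac : (0:ℝ) < (Nat.factorial (n+1) : ℝ) := by positivity
  rw [bseq, bseq, Kg_rec, mul_pow, show n + 2 + 1 = n + 3 from rfl, h2]
  field_simp

lemma bseq_le (n : ℕ) :
    bseq n ≤ max (bseq 0) (bseq 1 * (2 * Real.sqrt 2)) / (((n:ℝ)+1) * Real.sqrt ((n:ℝ)+1)) := by
  set D := max (bseq 0) (bseq 1 * (2 * Real.sqrt 2)) with hD
  have hD0 : 0 ≤ D := le_trans (bseq_nonneg 0) (le_max_left _ _)
  induction n using Nat.strong_induction_on with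
  | _ n ih =>
    match n with
    | 0 =>
      have h := le_max_left (bseq 0) (bseq 1 * (2 * Real.sqrt 2))
      rw [← hD] at h
      simpa using h
    | 1 =>
      have h := le_max_right (bseq 0) (bseq 1 * (2 * Real.sqrt 2))
      rw [← hD] at h
      have hs : (0:ℝ) < 2 * Real.sqrt 2 := by positivity
      have : ((1:ℕ):ℝ) + 1 = 2 := by norm_num
      rw [this, show Real.sqrt 2 = Real.sqrt 2 from rfl]
      rw [show (2:ℝ) * Real.sqrt 2 = 2 * Real.sqrt 2 from rfl] at h
      exact (le_div_iff₀ hs).mpr h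
    | (m + 2) =>
      have ihm := ih m (by omega)
      have hkey : Real.sqrt ((m:ℝ)+1) * Real.sqrt ((m:ℝ)+3) ≤ (m:ℝ)+2 := by
        rw [← Real.sqrt_mul (by positivity)]
        calc Real.sqrt (((m:ℝ)+1) * ((m:ℝ)+3)) ≤ Real.sqrt (((m:ℝ)+2)^2) := by
              apply Real.sqrt_le_sqrt; nlinarith
          _ = (m:ℝ)+2 := Real.sqrt_sq (by positivity)
      have hs1 : 0 < Real.sqrt ((m:ℝ)+1) := Real.sqrt_pos.mpr (by positivity)
      have hs3 : 0 < Real.sqrt ((m:ℝ)+3) := Real.sqrt_pos.mpr (by positivity)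
      rw [bseq_rec]
      push_cast
      rw [show ((m:ℝ)+2+1) = (m:ℝ)+3 by ring]
      have step : bseq m * (((m:ℝ)+1)^2 / (((m:ℝ)+2) * ((m:ℝ)+3)))
          ≤ (D / (((m:ℝ)+1) * Real.sqrt ((m:ℝ)+1))) * (((m:ℝ)+1)^2 / (((m:ℝ)+2) * ((m:ℝ)+3))) := by
        apply mul_le_mul_of_nonneg_right ihm (by positivity)
      refine step.trans ?_
      rw [div_mul_div_comm, div_le_div_iff₀ (by positivity) (by positivity)]
      have hsq1 : Real.sqrt ((m:ℝ)+1) * Real.sqrt ((m:ℝ)+1) = (m:ℝ)+1 := Real.mul_self_sqrt (by positivity)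
      have hsq3 : Real.sqrt ((m:ℝ)+3) * Real.sqrt ((m:ℝ)+3) = (m:ℝ)+3 := Real.mul_self_sqrt (by positivity)
      have base : ((m:ℝ)+1) * Real.sqrt ((m:ℝ)+3) ≤ Real.sqrt ((m:ℝ)+1) * ((m:ℝ)+2) := by
        have h := mul_le_mul_of_nonneg_left hkey hs1.le
        calc ((m:ℝ)+1) * Real.sqrt ((m:ℝ)+3)
            = Real.sqrt ((m:ℝ)+1) * (Real.sqrt ((m:ℝ)+1) * Real.sqrt ((m:ℝ)+3)) := by
              linear_combination (-(Real.sqrt ((m:ℝ)+3))) * hsq1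
          _ ≤ Real.sqrt ((m:ℝ)+1) * ((m:ℝ)+2) := h
      have final := mul_le_mul_of_nonneg_left base
        (show (0:ℝ) ≤ D * (((m:ℝ)+1) * (((m:ℝ)+3))) by positivity)
      calc D * ((m:ℝ)+1)^2 * (((m:ℝ)+3) * Real.sqrt ((m:ℝ)+3))
          = D * (((m:ℝ)+1) * ((m:ℝ)+3)) * (((m:ℝ)+1) * Real.sqrt ((m:ℝ)+3)) := by ring
        _ ≤ D * (((m:ℝ)+1) * ((m:ℝ)+3)) * (Real.sqrt ((m:ℝ)+1) * ((m:ℝ)+2)) := final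
        _ = D * (((m:ℝ)+1) * Real.sqrt ((m:ℝ)+1) * (((m:ℝ)+2) * ((m:ℝ)+3))) := by ring

lemma summable_base : Summable (fun n : ℕ => 1 / (((n:ℝ)+1) * Real.sqrt ((n:ℝ)+1))) := by
  have h0 : Summable (fun n : ℕ => 1 / ((n:ℝ) ^ (3/2 : ℝ))) :=
    Real.summable_one_div_nat_rpow.mpr (by norm_num)
  have h1 := (summable_nat_add_iff 1).mpr h0
  refine h1.congr fun n => ?_
  have hpos : (0:ℝ) < (n:ℝ) + 1 := by positivity
  have : ((n + 1 : ℕ) : ℝ) = (n:ℝ) + 1 := by push_cast; ring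
  rw [this, show (3/2:ℝ) = 1 + 1/2 by norm_num, Real.rpow_add hpos, Real.rpow_one,
    ← Real.sqrt_eq_rpow]

lemma summable_bseq : Summable bseq := by
  refine Summable.of_nonneg_of_le bseq_nonneg bseq_le ?_
  have := summable_base.mul_left (max (bseq 0) (bseq 1 * (2 * Real.sqrt 2)))
  refine this.congr fun n => ?_
  rw [mul_one_div]

lemma iteratedDeriv_ofReal (n : ℕ) (f : ℝ → ℝ) (hf : ContDiff ℝ n f) (x : ℝ) :
    iteratedDeriv n (fun t : ℝ => ((f t : ℝ) : ℂ)) x = ((iteratedDeriv n f x : ℝ) : ℂ) := by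
  have h := Complex.ofRealCLM.iteratedFDeriv_comp_left (hf.contDiffAt (x := x)) (i := n) le_rfl
  rw [iteratedDeriv_eq_iteratedFDeriv, iteratedDeriv_eq_iteratedFDeriv]
  have : (fun t : ℝ => ((f t : ℝ) : ℂ)) = Complex.ofRealCLM ∘ f := rfl
  rw [this, h]
  rfl

lemma contDiff_gauss : ContDiff ℝ (⊤ : ℕ∞) (fun y : ℝ => Real.exp (-(y ^ 2 / 2))) :=
  Real.contDiff_exp.comp (((contDiff_id.pow 2).div_const 2).neg)

lemma iterDeriv_gauss_bound (n : ℕ) (u : ℝ) :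
    |iteratedDeriv n (fun y : ℝ => Real.exp (-(y ^ 2 / 2))) u| ≤ Kg n / Real.sqrt (2 * π) := by
  set g : ℝ → ℝ := fun y => Real.exp (-(y ^ 2 / 2)) with hg
  set F : ℝ → ℂ := fun x : ℝ => Complex.exp (-↑π * (2 * ↑π : ℂ) * (x : ℂ) ^ 2) with hF
  have hπ : (π : ℂ) ≠ 0 := Complex.ofReal_ne_zero.mpr Real.pi_ne_zero
  have hb : (0:ℝ) < (2 * (π:ℂ)).re := by
    simp [Real.pi_pos]
  have hFr : ∀ x : ℝ, F x = ((Real.exp (-(2 * π ^ 2) * x ^ 2) : ℝ) : ℂ) := by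
    intro x
    rw [hF]
    show Complex.exp (-↑π * (2 * ↑π : ℂ) * (x : ℂ) ^ 2) = _
    rw [Complex.ofReal_exp]
    have harg : (-↑π * (2 * ↑π : ℂ) * (x : ℂ) ^ 2) = ((-(2 * π ^ 2) * x ^ 2 : ℝ) : ℂ) := by
      push_cast; ring
    rw [harg]
  have hint : ∀ k : ℕ, Integrable (fun x : ℝ => (x : ℝ) ^ k • F x) := by
    intro k
    have h1 : (fun x : ℝ => (x : ℝ) ^ k • F x)
        = fun x : ℝ => ((x ^ k * Real.exp (-(2 * π ^ 2) * x ^ 2) : ℝ) : ℂ) := by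
      funext x
      rw [hFr x, Complex.real_smul, Complex.ofReal_mul, Complex.ofReal_pow]
    rw [h1]
    exact (int_pow_gauss k (by positivity)).ofReal
  have hTF : 𝓕 F = fun t : ℝ => (((Real.sqrt (2 * π))⁻¹ * g t : ℝ) : ℂ) := by
    have h := fourier_gaussian_pi (b := (2 * π : ℂ)) hb
    rw [hF]
    rw [h]
    funext t
    have hc : (1 / (2 * (π:ℂ)) ^ (1/2 : ℂ)) = (((Real.sqrt (2 * π))⁻¹ : ℝ) : ℂ) := by
      have h2 : ((2 * π : ℝ) : ℂ) ^ (((1/2 : ℝ)) : ℂ) = (((2 * π : ℝ) ^ (1/2 : ℝ) : ℝ) : ℂ) :=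
        (Complex.ofReal_cpow (by positivity) _).symm
      rw [show ((1:ℂ)/2) = (((1/2 : ℝ)) : ℂ) by norm_num,
        show (2 * (π:ℂ)) = ((2 * π : ℝ) : ℂ) by push_cast; ring, h2,
        ← Real.sqrt_eq_rpow, one_div, ← Complex.ofReal_inv]
    have hexp : Complex.exp (-↑π / (2 * ↑π) * (t:ℂ) ^ 2) = ((g t : ℝ) : ℂ) := by
      rw [hg, Complex.ofReal_exp]
      have harg : (-↑π / (2 * ↑π) * (t:ℂ) ^ 2) = ((-(t ^ 2 / 2) : ℝ) : ℂ) := by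
        have h12 : (-↑π / (2 * ↑π) : ℂ) = -(1/2 : ℂ) := by
          field_simp
        rw [h12]
        push_cast
        ring
      rw [harg]
    rw [hc, hexp, ← Complex.ofReal_mul]
  have hID := Real.iteratedDeriv_fourier (f := F) (N := (n : ℕ∞))
    (fun k _ => hint k) (le_refl (n : ℕ∞))
  have hnorm : ‖iteratedDeriv n (𝓕 F) u‖ ≤ ∫ x : ℝ, (2 * π * |x|) ^ n * Real.exp (-(2 * π ^ 2) * x ^ 2) := by
    rw [hID]
    refine le_trans (VectorFourier.norm_fourierIntegral_le_integral_norm _ _ _ _ _) ?_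
    apply le_of_eq
    congr 1
    funext x
    rw [norm_smul, norm_pow, hFr]
    have h1 : ‖(-2 * ↑π * Complex.I * (x:ℂ))‖ = 2 * π * |x| := by
      simp [map_mul,
        abs_of_pos Real.pi_pos]
    rw [h1, Complex.norm_real, Real.norm_eq_abs, abs_of_pos (Real.exp_pos _)]
  have hsub : (∫ x : ℝ, (2 * π * |x|) ^ n * Real.exp (-(2 * π ^ 2) * x ^ 2)) = Kg n / (2 * π) := by
    have h := Measure.integral_comp_mul_left (fun y : ℝ => |y| ^ n * Real.exp (-(y ^ 2 / 2))) (2 * π)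
    have h2 : (fun x : ℝ => |2 * π * x| ^ n * Real.exp (-((2 * π * x) ^ 2 / 2)))
        = fun x : ℝ => (2 * π * |x|) ^ n * Real.exp (-(2 * π ^ 2) * x ^ 2) := by
      funext x
      rw [abs_mul, abs_of_pos (by positivity : (0:ℝ) < 2 * π)]
      congr 2
      ring
    rw [h2] at h
    rw [h, smul_eq_mul, Kg, abs_of_pos (by positivity : (0:ℝ) < (2*π)⁻¹)]
    rw [div_eq_inv_mul]
  have hRHS : iteratedDeriv n (𝓕 F) u = (((Real.sqrt (2 * π))⁻¹ * iteratedDeriv n g u : ℝ) : ℂ) := by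
    rw [hTF]
    have hcd : ContDiff ℝ n (fun t : ℝ => (Real.sqrt (2 * π))⁻¹ * g t) :=
      contDiff_const.mul (contDiff_gauss.of_le (mod_cast le_top))
    rw [iteratedDeriv_ofReal n _ hcd]
    congr 1
    have hmul : iteratedDeriv n (fun t : ℝ => (Real.sqrt (2 * π))⁻¹ * g t) u
        = (Real.sqrt (2 * π))⁻¹ * iteratedDeriv n g u := by
      simp only [← iteratedDerivWithin_univ]
      exact iteratedDerivWithin_const_mul (Set.mem_univ u) uniqueDiffOn_univ _
        ((contDiff_gauss.of_le (mod_cast le_top)).contDiffWithinAt)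
    exact hmul
  have hnval : ‖iteratedDeriv n (𝓕 F) u‖ = (Real.sqrt (2 * π))⁻¹ * |iteratedDeriv n g u| := by
    rw [hRHS, Complex.norm_real, Real.norm_eq_abs, abs_mul,
      abs_of_pos (by positivity : (0:ℝ) < (Real.sqrt (2*π))⁻¹)]
  rw [hnval, hsub] at hnorm
  have hs : (0:ℝ) < Real.sqrt (2 * π) := Real.sqrt_pos.mpr (by positivity)
  have hsq : Real.sqrt (2 * π) * Real.sqrt (2 * π) = 2 * π := Real.mul_self_sqrt (by positivity)
  rw [inv_mul_le_iff₀ hs] at hnorm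
  refine hnorm.trans (le_of_eq ?_)
  have e1 : Real.sqrt 2 ^ 2 = 2 := Real.sq_sqrt (by norm_num)
  have e2 : Real.sqrt π ^ 2 = π := Real.sq_sqrt Real.pi_pos.le
  have e3 : Real.sqrt (2 * π) ^ 2 = 2 * π := Real.sq_sqrt (by positivity)
  field_simp
  linear_combination Kg n * e3

/-- The key uniform coefficient bound. -/
lemma coeff_bound (n : ℕ) (u : ℝ) :
    Real.exp (-u ^ 2) / (2 * π) * (He n u) ^ 2 / (Nat.factorial (n + 1) : ℝ)
      ≤ bseq n / (2 * π) ^ 2 := by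
  have h1 := iterDeriv_gauss_bound n u
  have hs : (0:ℝ) < Real.sqrt (2 * π) := Real.sqrt_pos.mpr (by positivity)
  have e3 : Real.sqrt (2 * π) * Real.sqrt (2 * π) = 2 * π := Real.mul_self_sqrt (by positivity)
  have hsq2 : (iteratedDeriv n (fun y : ℝ => Real.exp (-(y ^ 2 / 2))) u) ^ 2
      = (He n u) ^ 2 * Real.exp (-u ^ 2) := by
    rw [iteratedDeriv_eq_iterate, Polynomial.deriv_gaussian_eq_hermite_mul_gaussian, He]
    have he : Real.exp (-(u ^ 2 / 2)) * Real.exp (-(u ^ 2 / 2)) = Real.exp (-u ^ 2) := by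
      rw [← Real.exp_add]
      congr 1
      ring
    have hsign : (((-1):ℝ) ^ n) ^ 2 = 1 := by
      rw [← pow_mul, mul_comm n 2, pow_mul]
      norm_num
    calc ((-1:ℝ) ^ n * (Polynomial.aeval u) (Polynomial.hermite n) * Real.exp (-(u ^ 2 / 2))) ^ 2
        = ((-1:ℝ) ^ n) ^ 2 * (((Polynomial.aeval u) (Polynomial.hermite n)) ^ 2
            * (Real.exp (-(u ^ 2 / 2)) * Real.exp (-(u ^ 2 / 2)))) := by ring
      _ = ((Polynomial.aeval u) (Polynomial.hermite n)) ^ 2 * Real.exp (-u ^ 2) := by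
          rw [hsign, he, one_mul]
  have hKb : (iteratedDeriv n (fun y : ℝ => Real.exp (-(y ^ 2 / 2))) u) ^ 2
      ≤ Kg n ^ 2 / (2 * π) := by
    have h2 := mul_self_le_mul_self (abs_nonneg _) h1
    calc (iteratedDeriv n (fun y : ℝ => Real.exp (-(y ^ 2 / 2))) u) ^ 2
        = |iteratedDeriv n (fun y : ℝ => Real.exp (-(y ^ 2 / 2))) u|
          * |iteratedDeriv n (fun y : ℝ => Real.exp (-(y ^ 2 / 2))) u| := by
          rw [abs_mul_abs_self, sq]
      _ ≤ (Kg n / Real.sqrt (2 * π)) * (Kg n / Real.sqrt (2 * π)) := h2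
      _ = Kg n ^ 2 / (2 * π) := by rw [div_mul_div_comm, e3, sq]
  have key : (He n u) ^ 2 * Real.exp (-u ^ 2) ≤ Kg n ^ 2 / (2 * π) := by
    rw [← hsq2]; exact hKb
  have hfac : (0:ℝ) < (Nat.factorial (n+1) : ℝ) := by positivity
  have lhs_eq : Real.exp (-u ^ 2) / (2 * π) * (He n u) ^ 2 / (Nat.factorial (n + 1) : ℝ)
      = ((He n u) ^ 2 * Real.exp (-u ^ 2)) / (2 * π * (Nat.factorial (n + 1) : ℝ)) := by
    field_simp
  have rhs_eq : bseq n / (2 * π) ^ 2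
      = (Kg n ^ 2 / (2 * π)) / (2 * π * (Nat.factorial (n + 1) : ℝ)) := by
    rw [bseq]
    have h2π : (2 * π : ℝ) ≠ 0 := by positivity
    have hfn : (Nat.factorial (n+1) : ℝ) ≠ 0 := hfac.ne'
    rw [div_div, div_div]
    congr 1
    ring
  rw [lhs_eq, rhs_eq, div_eq_mul_inv, div_eq_mul_inv (Kg n ^ 2 / (2 * π))]
  exact mul_le_mul_of_nonneg_right key (by positivity)

end LimVarAux

open LimVarAux Real in
/-- Uniform finiteness of the limiting variance series
`σ²(u) = Σ_{n≥1} (e^{-u²}/(2π)) He_{n-1}(u)²/n! ∫ ρ^n`: the series with `|ρ|^n`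
converges and is bounded by `C ∫|ρ|` for an absolute constant `C`, uniformly in
the level `u`, the dimension `d` and the correlation `ρ`; in particular the
series `σ²(u)` converges absolutely, with `|σ²(u)| ≤ C ∫|ρ|`. -/
theorem limiting_variance_series_finite :
    ∃ C : ℝ, 0 < C ∧
      ∀ (d : ℕ), 1 ≤ d →
        ∀ ρ : (Fin d → ℝ) → ℝ, Integrable ρ volume → (∀ t, |ρ t| ≤ 1) →
          ∀ u : ℝ,
            Summable (fun n : ℕ =>
              Real.exp (-u ^ 2) / (2 * Real.pi) * (He n u) ^ 2
                / (Nat.factorial (n + 1) : ℝ) * ∫ t, |ρ t| ^ (n + 1)) ∧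
            (∑' n : ℕ,
              Real.exp (-u ^ 2) / (2 * Real.pi) * (He n u) ^ 2
                / (Nat.factorial (n + 1) : ℝ) * ∫ t, |ρ t| ^ (n + 1))
              ≤ C * ∫ t, |ρ t| ∧
            Summable (fun n : ℕ =>
              |Real.exp (-u ^ 2) / (2 * Real.pi) * (He n u) ^ 2
                / (Nat.factorial (n + 1) : ℝ) * ∫ t, (ρ t) ^ (n + 1)|) ∧
            |∑' n : ℕ,
              Real.exp (-u ^ 2) / (2 * Real.pi) * (He n u) ^ 2
                / (Nat.factorial (n + 1) : ℝ) * ∫ t, (ρ t) ^ (n + 1)|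
              ≤ C * ∫ t, |ρ t| := by
  have hA : Summable (fun n : ℕ => bseq n / (2 * π) ^ 2) := summable_bseq.div_const _
  have hA0 : ∀ n, 0 ≤ bseq n / (2 * π) ^ 2 := fun n => div_nonneg (bseq_nonneg n) (by positivity)
  set A : ℕ → ℝ := fun n => bseq n / (2 * π) ^ 2 with hAdef
  have htsA : 0 ≤ ∑' n, A n := tsum_nonneg hA0
  refine ⟨(∑' n, A n) + 1, by linarith, ?_⟩
  intro d hd ρ hρ hρ1 u
  set c : ℕ → ℝ := fun n => Real.exp (-u ^ 2) / (2 * Real.pi) * (He n u) ^ 2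
    / (Nat.factorial (n + 1) : ℝ) with hcdef
  have hc0 : ∀ n, 0 ≤ c n := fun n => by
    have : (0:ℝ) < (Nat.factorial (n+1) : ℝ) := by positivity
    positivity
  have hcA : ∀ n, c n ≤ A n := fun n => coeff_bound n u
  set I : ℝ := ∫ t, |ρ t| with hIdef
  have hI0 : 0 ≤ I := integral_nonneg fun t => abs_nonneg _
  have habs_int : ∀ n : ℕ, Integrable (fun t => |ρ t| ^ (n + 1)) := by
    intro n
    refine Integrable.mono' hρ.abs (hρ.abs.aestronglyMeasurable.pow _) ?_
    filter_upwards with t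
    rw [Real.norm_eq_abs, abs_of_nonneg (pow_nonneg (abs_nonneg _) _)]
    calc |ρ t| ^ (n + 1) ≤ |ρ t| ^ 1 :=
          pow_le_pow_of_le_one (abs_nonneg _) (hρ1 t) (by omega)
      _ = |ρ t| := pow_one _
  have hint_nonneg : ∀ n : ℕ, 0 ≤ ∫ t, |ρ t| ^ (n + 1) := fun n =>
    integral_nonneg fun t => pow_nonneg (abs_nonneg _) _
  have hint_le : ∀ n : ℕ, (∫ t, |ρ t| ^ (n + 1)) ≤ I := by
    intro n
    refine integral_mono (habs_int n) hρ.abs fun t => ?_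
    calc |ρ t| ^ (n + 1) ≤ |ρ t| ^ 1 :=
          pow_le_pow_of_le_one (abs_nonneg _) (hρ1 t) (by omega)
      _ = |ρ t| := pow_one _
  have hterm1_le : ∀ n : ℕ, c n * (∫ t, |ρ t| ^ (n + 1)) ≤ A n * I := fun n =>
    mul_le_mul (hcA n) (hint_le n) (hint_nonneg n) (hA0 n)
  have hterm1_nonneg : ∀ n : ℕ, 0 ≤ c n * (∫ t, |ρ t| ^ (n + 1)) := fun n =>
    mul_nonneg (hc0 n) (hint_nonneg n)
  have hAImul : Summable (fun n => A n * I) := hA.mul_right I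
  have hsum1 : Summable (fun n : ℕ => c n * (∫ t, |ρ t| ^ (n + 1))) :=
    Summable.of_nonneg_of_le hterm1_nonneg hterm1_le hAImul
  have htsum1 : (∑' n : ℕ, c n * (∫ t, |ρ t| ^ (n + 1))) ≤ ((∑' n, A n) + 1) * I := by
    calc (∑' n : ℕ, c n * (∫ t, |ρ t| ^ (n + 1))) ≤ ∑' n, A n * I :=
          hsum1.tsum_le_tsum hterm1_le hAImul
      _ = (∑' n, A n) * I := tsum_mul_right
      _ ≤ ((∑' n, A n) + 1) * I := mul_le_mul_of_nonneg_right (by linarith) hI0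
  -- second series
  have habs2 : ∀ n : ℕ, |c n * ∫ t, (ρ t) ^ (n + 1)| ≤ A n * I := by
    intro n
    rw [abs_mul, abs_of_nonneg (hc0 n)]
    refine mul_le_mul (hcA n) ?_ (abs_nonneg _) (hA0 n)
    calc |∫ t, (ρ t) ^ (n + 1)| ≤ ∫ t, |(ρ t) ^ (n + 1)| := by
          simpa [Real.norm_eq_abs] using
            norm_integral_le_integral_norm (μ := volume) (f := fun t => (ρ t) ^ (n + 1))
      _ = ∫ t, |ρ t| ^ (n + 1) := by
          congr 1 with t
          rw [abs_pow]
      _ ≤ I := hint_le n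
  have hsum2 : Summable (fun n : ℕ => |c n * ∫ t, (ρ t) ^ (n + 1)|) :=
    Summable.of_nonneg_of_le (fun n => abs_nonneg _) habs2 hAImul
  have htsum2 : |∑' n : ℕ, c n * ∫ t, (ρ t) ^ (n + 1)| ≤ ((∑' n, A n) + 1) * I := by
    calc |∑' n : ℕ, c n * ∫ t, (ρ t) ^ (n + 1)|
        ≤ ∑' n : ℕ, |c n * ∫ t, (ρ t) ^ (n + 1)| := by
          have hnorm_sum : Summable (fun n : ℕ => ‖c n * ∫ t, (ρ t) ^ (n + 1)‖) :=
            hsum2.congr fun n => (Real.norm_eq_abs _).symm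
          have h := norm_tsum_le_tsum_norm hnorm_sum
          rw [Real.norm_eq_abs] at h
          exact h.trans (le_of_eq (tsum_congr fun n => Real.norm_eq_abs _))
      _ ≤ ∑' n, A n * I := hsum2.tsum_le_tsum habs2 hAImul
      _ = (∑' n, A n) * I := tsum_mul_right
      _ ≤ ((∑' n, A n) + 1) * I := mul_le_mul_of_nonneg_right (by linarith) hI0
  exact ⟨hsum1, htsum1, hsum2, htsum2⟩
end

section
/- There exists an absolute constant K' > 0 such that for every u ∈ ℝ and every integer N ≥ 1, Σ_{n=N+1}^∞ e^{-u²} · He_{n-1}(u)²/n! ≤ K' · N^{-1/6}. -/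
open MeasureTheory

namespace HermiteTailAux

open Polynomial

lemma derivative_hermite (n : ℕ) :
    derivative (hermite (n+1)) = ((n:ℤ[X])+1) * hermite n := by
  induction n with
  | zero => simp [hermite_one, hermite_zero]
  | succ n ih =>
      have h2 : derivative (((n:ℤ[X])+1) * hermite n) = ((n:ℤ[X])+1) * derivative (hermite n) := by
        rw [derivative_mul]; simp
      rw [hermite_succ (n+1), derivative_sub, derivative_mul, derivative_X, one_mul, ih, h2,
        hermite_succ n]
      push_cast
      ring

noncomputable def Hp (n : ℕ) : Polynomial ℝ := (hermite n).map (Int.castRingHom ℝ)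

lemma He_eq (n : ℕ) (x : ℝ) : He n x = (Hp n).eval x := by
  simp [He, Hp, aeval_def, eval_map]

lemma Hp_succ (n : ℕ) : Hp (n+1) = X * Hp n - derivative (Hp n) := by
  unfold Hp
  rw [hermite_succ, Polynomial.map_sub, Polynomial.map_mul, map_X, derivative_map]

lemma derivative_Hp (n : ℕ) : derivative (Hp (n+1)) = ((n:ℝ[X])+1) * Hp n := by
  unfold Hp
  rw [derivative_map, derivative_hermite, Polynomial.map_mul]
  simp

lemma Hp_rec (n : ℕ) : Hp (n+2) = X * Hp (n+1) - ((n:ℝ[X])+1) * Hp n := by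
  rw [Hp_succ (n+1), derivative_Hp]

lemma He_rec (n : ℕ) (x : ℝ) : He (n+2) x = x * He (n+1) x - ((n:ℝ)+1) * He n x := by
  simp only [He_eq, Hp_rec n, eval_sub, eval_mul, eval_X, eval_add, eval_one, eval_natCast]

noncomputable def phi (n : ℕ) (x : ℝ) : ℝ := Real.exp (-(x^2)/2) * He n x

lemma phi_rec (n : ℕ) (x : ℝ) : phi (n+2) x = x * phi (n+1) x - ((n:ℝ)+1) * phi n x := by
  simp only [phi, He_rec]; ring

lemma hasDerivAt_phi (n : ℕ) (x : ℝ) : HasDerivAt (phi n) (-(phi (n+1) x)) x := by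
  have hg : HasDerivAt (fun y : ℝ => Real.exp (-(y^2)/2)) (-x * Real.exp (-(x^2)/2)) x := by
    have h1 : HasDerivAt (fun y : ℝ => -(y^2)/2) (-x) x := by
      have := (hasDerivAt_pow 2 x).neg.div_const 2
      simpa using this.congr_deriv (by ring)
    simpa [mul_comm] using h1.exp
  have hp : HasDerivAt (fun y : ℝ => He n y) (eval x (derivative (Hp n))) x := by
    have := (Hp n).hasDerivAt x
    simpa [He_eq] using this
  have := hg.mul hp
  have hd : eval x (derivative (Hp n)) = x * He n x - He (n+1) x := by
    have := congrArg (eval x) (Hp_succ n)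
    simp only [eval_sub, eval_mul, eval_X, ← He_eq] at this
    linarith
  rw [hd] at this
  have hfun : phi n = (fun y : ℝ => Real.exp (-(y^2)/2)) * fun y => He n y := by
    funext y; simp [phi]
  rw [hfun]
  simpa [phi] using this.congr_deriv (by ring)

noncomputable def En (n : ℕ) (x : ℝ) : ℝ := (phi (n+1) x)^2 + ((n:ℝ)+1) * (phi n x)^2

lemma hasDerivAt_En (n : ℕ) (x : ℝ) :
    HasDerivAt (En n) (-2*x*(phi (n+1) x)^2) x := by
  have h1 := (hasDerivAt_phi (n+1) x).pow 2
  have h2 := ((hasDerivAt_phi n x).pow 2).const_mul ((n:ℝ)+1)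
  have h := h1.add h2
  have heq : (2:ℕ) * phi (n+1) x ^ (2-1) * -(phi (n+1+1) x)
      + ((n:ℝ)+1) * ((2:ℕ) * phi n x ^ (2-1) * -(phi (n+1) x)) = -2*x*(phi (n+1) x)^2 := by
    have hr : phi (n+1+1) x = x * phi (n+1) x - ((n:ℝ)+1) * phi n x := phi_rec n x
    rw [hr]; push_cast; ring
  rw [heq] at h
  exact h

lemma En_le (n : ℕ) (x : ℝ) : En n x ≤ En n 0 := by
  have hdiff : ∀ y, HasDerivAt (En n) (-2*y*(phi (n+1) y)^2) y := hasDerivAt_En n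
  have hdiff' : Differentiable ℝ (En n) := fun y => (hdiff y).differentiableAt
  have hcont : Continuous (En n) := hdiff'.continuous
  rcases le_or_gt 0 x with hx | hx
  · have hA : AntitoneOn (En n) (Set.Ici 0) := by
      apply antitoneOn_of_deriv_nonpos (convex_Ici 0) hcont.continuousOn
      · intro y _; exact (hdiff y).differentiableAt.differentiableWithinAt
      · intro y hy
        rw [(hdiff y).deriv]
        rw [interior_Ici] at hy
        have hy' : (0:ℝ) < y := hy
        nlinarith [sq_nonneg (phi (n+1) y)]
    exact hA Set.self_mem_Ici hx hx
  · have hM : MonotoneOn (En n) (Set.Iic 0) := by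
      apply monotoneOn_of_deriv_nonneg (convex_Iic 0) hcont.continuousOn
      · intro y _; exact (hdiff y).differentiableAt.differentiableWithinAt
      · intro y hy
        rw [(hdiff y).deriv]
        rw [interior_Iic] at hy
        have hy' : y < (0:ℝ) := hy
        nlinarith [sq_nonneg (phi (n+1) y)]
    exact hM (le_of_lt hx) Set.self_mem_Iic (le_of_lt hx)

lemma He_zero_zero : He 0 0 = 1 := by simp [He, hermite_zero]
lemma He_one_zero : He 1 0 = 0 := by simp [He, hermite_one]
lemma He_rec_zero (n : ℕ) : He (n+2) 0 = -((n:ℝ)+1) * He n 0 := by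
  rw [He_rec]; ring

lemma He_odd_zero (k : ℕ) : He (2*k+1) 0 = 0 := by
  induction k with
  | zero => simpa using He_one_zero
  | succ k ih =>
      have h : 2*(k+1)+1 = (2*k+1)+2 := by ring
      rw [h, He_rec_zero, ih]; ring

lemma key_S (k : ℕ) :
    ((2*(k:ℝ)+1))^3 * (He (2*k) 0)^4 ≤ ((Nat.factorial (2*k+1) : ℝ))^2 := by
  induction k with
  | zero => simp [He_zero_zero, Nat.factorial]
  | succ k ih =>
      have h : 2*(k+1) = (2*k)+2 := by ring
      rw [h, He_rec_zero]
      have hf : (Nat.factorial (2*k+2+1) : ℝ)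
          = ((2*(k:ℝ)+3)) * ((2*(k:ℝ)+2)) * (Nat.factorial (2*k+1) : ℝ) := by
        have h2 : 2*k+2+1 = ((2*k+1)+1)+1 := by ring
        rw [h2, Nat.factorial_succ, Nat.factorial_succ]
        push_cast; ring
      rw [hf]
      have step1 : (2*(k:ℝ)+3)^3*(2*(k:ℝ)+1) * ((2*(k:ℝ)+1)^3 * (He (2*k) 0)^4)
          ≤ (2*(k:ℝ)+3)^3*(2*(k:ℝ)+1) * ((Nat.factorial (2*k+1) : ℝ))^2 :=
        mul_le_mul_of_nonneg_left ih (by positivity)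
      push_cast
      nlinarith [step1, sq_nonneg ((2*(k:ℝ)+3)*(Nat.factorial (2*k+1):ℝ))]

lemma phi_zero (n : ℕ) : phi n 0 = He n 0 := by simp [phi]

lemma Q (m : ℕ) : (En m 0)^2 * ((m:ℝ)+1) ≤ ((Nat.factorial (m+1) : ℝ))^2 := by
  rcases Nat.even_or_odd m with ⟨k, hk⟩ | ⟨k, hk⟩
  · -- m = k + k = 2k
    have hk2 : m = 2*k := by omega
    subst hk2
    have hodd : He (2*k+1) 0 = 0 := He_odd_zero k
    have hEn : En (2*k) 0 = (2*(k:ℝ)+1) * (He (2*k) 0)^2 := by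
      simp only [En, phi_zero]
      rw [hodd]
      push_cast; ring
    rw [hEn]
    have := key_S k
    push_cast
    nlinarith [this, sq_nonneg (He (2*k) 0)]
  · -- m = 2k+1
    subst hk
    have hodd : He (2*k+1) 0 = 0 := He_odd_zero k
    have hrec : He (2*k+2) 0 = -((2*(k:ℝ))+1) * He (2*k) 0 := by
      have := He_rec_zero (2*k)
      push_cast at this ⊢
      convert this using 2
    have hEn : En (2*k+1) 0 = (2*(k:ℝ)+1)^2 * (He (2*k) 0)^2 := by
      simp only [En, phi_zero]
      have h1 : 2*k+1+1 = 2*k+2 := by ring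
      rw [h1, hrec, hodd]
      push_cast; ring
    rw [hEn]
    have hf : (Nat.factorial (2*k+1+1) : ℝ) = ((2*(k:ℝ))+2) * (Nat.factorial (2*k+1) : ℝ) := by
      rw [Nat.factorial_succ]; push_cast; ring
    rw [hf]
    have hS := key_S k
    have step1 : ((2*(k:ℝ)+1)*(2*(k:ℝ)+2)) * ((2*(k:ℝ)+1)^3 * (He (2*k) 0)^4)
        ≤ ((2*(k:ℝ)+1)*(2*(k:ℝ)+2)) * ((Nat.factorial (2*k+1) : ℝ))^2 :=
      mul_le_mul_of_nonneg_left hS (by positivity)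
    push_cast
    nlinarith [step1, sq_nonneg ((Nat.factorial (2*k+1):ℝ))]

lemma term_le (m : ℕ) (u : ℝ) :
    Real.exp (-u^2) * (He m u)^2 / (Nat.factorial (m+1) : ℝ)
      ≤ 1/(((m:ℝ)+1) * Real.sqrt ((m:ℝ)+1)) := by
  have hM : (0:ℝ) < (m:ℝ)+1 := by positivity
  have hF : (0:ℝ) < (Nat.factorial (m+1) : ℝ) := by positivity
  have hs : (0:ℝ) < Real.sqrt ((m:ℝ)+1) := Real.sqrt_pos.2 hM
  have hexp : Real.exp (-u^2) * (He m u)^2 = (phi m u)^2 := by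
    have h : Real.exp (-(u^2)/2) ^ 2 = Real.exp (-u^2) := by
      rw [← Real.exp_nat_mul]; congr 1; push_cast; ring
    simp only [phi, mul_pow, h]
  have hEn : ((m:ℝ)+1) * (phi m u)^2 ≤ En m 0 := by
    have h1 : ((m:ℝ)+1) * (phi m u)^2 ≤ En m u := by
      simp only [En]; nlinarith [sq_nonneg (phi (m+1) u)]
    exact le_trans h1 (En_le m u)
  have hEn0 : (0:ℝ) ≤ En m 0 := by
    simp only [En]; positivity
  have hB : En m 0 * Real.sqrt ((m:ℝ)+1) ≤ (Nat.factorial (m+1) : ℝ) := by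
    apply le_of_pow_le_pow_left₀ two_ne_zero hF.le
    rw [mul_pow, Real.sq_sqrt hM.le]
    exact Q m
  rw [hexp, div_le_div_iff₀ hF (by positivity)]
  have h2 : (phi m u)^2 * (((m:ℝ)+1) * Real.sqrt ((m:ℝ)+1))
      = (((m:ℝ)+1) * (phi m u)^2) * Real.sqrt ((m:ℝ)+1) := by ring
  rw [h2, one_mul]
  calc (((m:ℝ)+1) * (phi m u)^2) * Real.sqrt ((m:ℝ)+1)
      ≤ En m 0 * Real.sqrt ((m:ℝ)+1) := by
        exact mul_le_mul_of_nonneg_right hEn hs.le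
    _ ≤ (Nat.factorial (m+1) : ℝ) := hB

lemma tele (a : ℕ) (ha : 1 ≤ a) :
    1/(((a:ℝ)+1) * Real.sqrt ((a:ℝ)+1))
      ≤ 2*(1/Real.sqrt (a:ℝ) - 1/Real.sqrt ((a:ℝ)+1)) := by
  have ha' : (1:ℝ) ≤ (a:ℝ) := by exact_mod_cast ha
  set s := Real.sqrt (a:ℝ) with hsdef
  set t := Real.sqrt ((a:ℝ)+1) with htdef
  have hs : 0 < s := Real.sqrt_pos.2 (by linarith)
  have ht : 0 < t := Real.sqrt_pos.2 (by linarith)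
  have hst : s ≤ t := Real.sqrt_le_sqrt (by linarith)
  have hs2 : s^2 = (a:ℝ) := Real.sq_sqrt (by linarith)
  have ht2 : t^2 = (a:ℝ)+1 := Real.sq_sqrt (by linarith)
  have hA : ((a:ℝ)+1) = t^2 := ht2.symm
  rw [hA, div_sub_div _ _ hs.ne' ht.ne', ← mul_div_assoc]
  rw [div_le_div_iff₀ (by positivity) (by positivity)]
  have key : (t-s)*(t+s) = 1 := by nlinarith [hs2, ht2]
  nlinarith [key, mul_pos hs ht, mul_le_mul_of_nonneg_right hst ht.le,
    mul_pos (mul_pos hs ht) ht, sq_nonneg (t-s), mul_le_mul_of_nonneg_right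
      (mul_le_mul_of_nonneg_right hst ht.le) ht.le]

end HermiteTailAux

/-- Uniform-in-the-level tail bound for the Hermite variance series:
`Σ_{n=N+1}^∞ e^{-u²} He_{n-1}(u)²/n! ≤ K' N^{-1/6}` for an absolute constant
`K' > 0` (the sum below runs over `m = N + 1 + n`, `n ∈ ℕ`). -/
theorem hermite_series_tail_bound :
    ∃ K' : ℝ, 0 < K' ∧
      ∀ (u : ℝ) (N : ℕ), 1 ≤ N →
        Summable (fun n : ℕ =>
          Real.exp (-u ^ 2) * (He (N + n) u) ^ 2 / (Nat.factorial (N + 1 + n) : ℝ)) ∧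
        (∑' n : ℕ,
          Real.exp (-u ^ 2) * (He (N + n) u) ^ 2 / (Nat.factorial (N + 1 + n) : ℝ))
          ≤ K' * (N : ℝ) ^ (-(1 / 6 : ℝ)) := by
  classical
  refine ⟨2, by norm_num, fun u N hN => ?_⟩
  set f : ℕ → ℝ := fun n =>
    Real.exp (-u ^ 2) * (He (N + n) u) ^ 2 / (Nat.factorial (N + 1 + n) : ℝ) with hf
  have hf_nonneg : ∀ n, 0 ≤ f n := by
    intro n
    apply div_nonneg _ (by positivity)
    positivity
  have hNR : (1:ℝ) ≤ (N:ℝ) := by exact_mod_cast hN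
  -- partial sums bounded by 2 / sqrt N
  have hpartial : ∀ M : ℕ, ∑ n ∈ Finset.range M, f n ≤ 2 / Real.sqrt (N:ℝ) := by
    intro M
    have hterm : ∀ n : ℕ, f n ≤
        2*(1/Real.sqrt ((N+n:ℕ):ℝ) - 1/Real.sqrt ((N+(n+1):ℕ):ℝ)) := by
      intro n
      have h1 : f n ≤ 1/(((((N+n:ℕ):ℝ))+1) * Real.sqrt ((((N+n:ℕ):ℝ))+1)) := by
        have := HermiteTailAux.term_le (N+n) u
        have hidx : N + n + 1 = N + 1 + n := by omega
        rw [hidx] at this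
        exact this
      have h2 := HermiteTailAux.tele (N+n) (le_trans hN (Nat.le_add_right N n))
      have hcast : ((N+(n+1):ℕ):ℝ) = (((N+n:ℕ):ℝ))+1 := by push_cast; ring
      rw [hcast]
      calc f n ≤ 1/(((((N+n:ℕ):ℝ))+1) * Real.sqrt ((((N+n:ℕ):ℝ))+1)) := h1
        _ ≤ 2*(1/Real.sqrt ((N+n:ℕ):ℝ) - 1/Real.sqrt ((((N+n:ℕ):ℝ))+1)) := h2
    calc ∑ n ∈ Finset.range M, f n
        ≤ ∑ n ∈ Finset.range M,
            2*(1/Real.sqrt ((N+n:ℕ):ℝ) - 1/Real.sqrt ((N+(n+1):ℕ):ℝ)) :=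
          Finset.sum_le_sum (fun n _ => hterm n)
      _ = 2 * ∑ n ∈ Finset.range M,
            (1/Real.sqrt ((N+n:ℕ):ℝ) - 1/Real.sqrt ((N+(n+1):ℕ):ℝ)) := by
          rw [Finset.mul_sum]
      _ = 2 * (1/Real.sqrt ((N+0:ℕ):ℝ) - 1/Real.sqrt ((N+M:ℕ):ℝ)) := by
          rw [Finset.sum_range_sub' (fun j => 1/Real.sqrt ((N+j:ℕ):ℝ))]
      _ ≤ 2 * (1/Real.sqrt ((N:ℕ):ℝ)) := by
          have : 0 ≤ 1/Real.sqrt ((N+M:ℕ):ℝ) := by positivity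
          have h0 : N + 0 = N := by omega
          rw [h0]
          linarith
      _ = 2 / Real.sqrt (N:ℝ) := by rw [mul_one_div]
  have hsum : Summable f := summable_of_sum_range_le hf_nonneg hpartial
  refine ⟨hsum, ?_⟩
  have htsum : ∑' n, f n ≤ 2 / Real.sqrt (N:ℝ) :=
    Real.tsum_le_of_sum_range_le hf_nonneg hpartial
  have hfinal : 2 / Real.sqrt (N:ℝ) ≤ 2 * (N:ℝ) ^ (-(1/6:ℝ)) := by
    have hNpos : (0:ℝ) < (N:ℝ) := by linarith
    have h2 : 2 / Real.sqrt (N:ℝ) = 2 * (N:ℝ) ^ (-(1/2):ℝ) := by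
      rw [Real.sqrt_eq_rpow, Real.rpow_neg hNpos.le, div_eq_mul_inv]
    rw [h2]
    have h3 : (N:ℝ) ^ (-(1/2):ℝ) ≤ (N:ℝ) ^ (-(1/6):ℝ) :=
      Real.rpow_le_rpow_of_exponent_le hNR (by norm_num)
    linarith
  exact le_trans htsum hfinal
end
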